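/- arXiv:1911.02600 — 2 statements merged into one kernel-verified Lean document; each statement's English description precedes it below -/
import Mathlib

section
/- Let 0 ≤ β ≤ α and δ ∈ (0,1]. For every ξ ∈ ℝⁿ with |ξ| > 1, one has (|ξ|^{2α} − |ξ|^{2β})² ≤ 2 · (α−β)^{2δ} · |ξ|^{4α+2δ}. -/
lemma one_sub_exp_neg_le_rpow (x δ : ℝ) (hx : 0 ≤ x) (hδ0 : 0 < δ) (hδ1 : δ ≤ 1) :
    1 - Real.exp (-x) ≤ x ^ δ := by
  rcases le_or_gt x 1 with h1 | h1
  · have h2 : 1 - x ≤ Real.exp (-x) := by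
      have := Real.add_one_le_exp (-x); linarith
    have h3 : 1 - Real.exp (-x) ≤ x := by linarith
    rcases eq_or_lt_of_le hx with h0 | h0
    · simp [← h0, Real.zero_rpow (ne_of_gt hδ0)]
    · have : x ≤ x ^ δ := by
        calc x = x ^ (1:ℝ) := (Real.rpow_one x).symm
        _ ≤ x ^ δ := Real.rpow_le_rpow_of_exponent_ge h0 h1 hδ1
      linarith
  · have h2 : (1:ℝ) ≤ x ^ δ := by
      calc (1:ℝ) = x ^ (0:ℝ) := (Real.rpow_zero x).symm
      _ ≤ x ^ δ := Real.rpow_le_rpow_of_exponent_le (le_of_lt h1) (le_of_lt hδ0)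
    have := Real.exp_nonneg (-x); linarith

lemma log_le_div_e (r : ℝ) (hr : 0 < r) : Real.log r ≤ r / Real.exp 1 := by
  have he : (0:ℝ) < Real.exp 1 := Real.exp_pos 1
  have h1 : Real.log (r / Real.exp 1) ≤ r / Real.exp 1 - 1 :=
    Real.log_le_sub_one_of_pos (div_pos hr he)
  have h2 : Real.log (r / Real.exp 1) = Real.log r - 1 := by
    rw [Real.log_div (ne_of_gt hr) (ne_of_gt he), Real.log_exp]
  linarith

theorem high_frequency_symbol_estimate {n : ℕ} (α β δ : ℝ)
    (hβ : 0 ≤ β) (hβα : β ≤ α) (hδ0 : 0 < δ) (hδ1 : δ ≤ 1)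
    (ξ : EuclideanSpace ℝ (Fin n)) (hξ : 1 < ‖ξ‖) :
    (‖ξ‖ ^ (2 * α) - ‖ξ‖ ^ (2 * β)) ^ 2 ≤
      2 * (α - β) ^ (2 * δ) * ‖ξ‖ ^ (4 * α + 2 * δ) := by
  set r : ℝ := ‖ξ‖ with hrdef
  have hr0 : (0:ℝ) < r := lt_trans one_pos hξ
  have hs : (0:ℝ) ≤ α - β := sub_nonneg.2 hβα
  have hL : (0:ℝ) < Real.log r := Real.log_pos hξ
  set x : ℝ := 2 * (α - β) * Real.log r with hxdef
  have hx0 : 0 ≤ x := by positivity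
  -- rewrite r^{2β} = r^{2α} * exp(-x)
  have hsplit : r ^ (2 * β) = r ^ (2 * α) * Real.exp (-x) := by
    rw [Real.rpow_def_of_pos hr0, Real.rpow_def_of_pos hr0, ← Real.exp_add]
    ring_nf
    rw [hxdef]; ring_nf
  have hA0 : 0 ≤ r ^ (2 * α) - r ^ (2 * β) := by
    have := Real.rpow_le_rpow_of_exponent_le (le_of_lt hξ)
      (by linarith : 2 * β ≤ 2 * α)
    linarith
  -- main bound on the difference
  have hsq2 : (1:ℝ) ≤ Real.sqrt 2 := by
    nlinarith [Real.sq_sqrt (by norm_num : (0:ℝ) ≤ 2), Real.sqrt_nonneg 2]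
  have hsq2' : (0:ℝ) ≤ Real.sqrt 2 := by linarith
  have hxle : x ^ δ ≤ (α - β) ^ δ * (Real.sqrt 2 * r ^ δ) := by
    have h2L : 2 * Real.log r ≤ Real.sqrt 2 * r := by
      have h1 : Real.log r ≤ r / Real.exp 1 := log_le_div_e r hr0
      have he : (2:ℝ) ≤ Real.exp 1 := by
        nlinarith [Real.add_one_le_exp (1:ℝ)]
      have hdiv : r / Real.exp 1 ≤ r / 2 := by
        gcongr
      nlinarith
    have hx' : x = (α - β) * (2 * Real.log r) := by rw [hxdef]; ring
    rw [hx', Real.mul_rpow hs (by positivity)]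
    apply mul_le_mul_of_nonneg_left _ (Real.rpow_nonneg hs δ)
    calc (2 * Real.log r) ^ δ ≤ (Real.sqrt 2 * r) ^ δ :=
        Real.rpow_le_rpow (by positivity) h2L (le_of_lt hδ0)
      _ = Real.sqrt 2 ^ δ * r ^ δ := Real.mul_rpow hsq2' (le_of_lt hr0)
      _ ≤ Real.sqrt 2 * r ^ δ := by
          apply mul_le_mul_of_nonneg_right _ (Real.rpow_nonneg (le_of_lt hr0) δ)
          calc Real.sqrt 2 ^ δ ≤ Real.sqrt 2 ^ (1:ℝ) :=
              Real.rpow_le_rpow_of_exponent_le hsq2 hδ1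
            _ = Real.sqrt 2 := Real.rpow_one _
  have key : r ^ (2 * α) - r ^ (2 * β) ≤
      Real.sqrt 2 * (α - β) ^ δ * r ^ (2 * α + δ) := by
    have h1 : r ^ (2 * α) - r ^ (2 * β) = r ^ (2 * α) * (1 - Real.exp (-x)) := by
      rw [hsplit]; ring
    have h2 : 1 - Real.exp (-x) ≤ x ^ δ := one_sub_exp_neg_le_rpow x δ hx0 hδ0 hδ1
    have h3 : r ^ (2 * α) * (1 - Real.exp (-x)) ≤
        r ^ (2 * α) * ((α - β) ^ δ * (Real.sqrt 2 * r ^ δ)) := by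
      apply mul_le_mul_of_nonneg_left (le_trans h2 hxle)
      exact Real.rpow_nonneg (le_of_lt hr0) _
    rw [h1]
    calc r ^ (2 * α) * (1 - Real.exp (-x)) ≤
        r ^ (2 * α) * ((α - β) ^ δ * (Real.sqrt 2 * r ^ δ)) := h3
      _ = Real.sqrt 2 * (α - β) ^ δ * (r ^ (2 * α) * r ^ δ) := by ring
      _ = Real.sqrt 2 * (α - β) ^ δ * r ^ (2 * α + δ) := by
          rw [← Real.rpow_add hr0]
  have hRHS0 : 0 ≤ Real.sqrt 2 * (α - β) ^ δ * r ^ (2 * α + δ) := by positivity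
  have hfinal := mul_self_le_mul_self hA0 key
  have e1 : ((α - β) ^ δ) * ((α - β) ^ δ) = (α - β) ^ (2 * δ) := by
    rw [← Real.rpow_add' hs (by linarith)]; ring_nf
  have e2 : (r ^ (2 * α + δ)) * (r ^ (2 * α + δ)) = r ^ (4 * α + 2 * δ) := by
    rw [← Real.rpow_add hr0]; ring_nf
  have e3 : Real.sqrt 2 * Real.sqrt 2 = 2 := Real.mul_self_sqrt (by norm_num)
  calc (r ^ (2 * α) - r ^ (2 * β)) ^ 2
      = (r ^ (2 * α) - r ^ (2 * β)) * (r ^ (2 * α) - r ^ (2 * β)) := sq _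
    _ ≤ (Real.sqrt 2 * (α - β) ^ δ * r ^ (2 * α + δ)) *
        (Real.sqrt 2 * (α - β) ^ δ * r ^ (2 * α + δ)) := hfinal
    _ = (Real.sqrt 2 * Real.sqrt 2) * ((α - β) ^ δ * (α - β) ^ δ) *
        (r ^ (2 * α + δ) * r ^ (2 * α + δ)) := by ring
    _ = 2 * (α - β) ^ (2 * δ) * r ^ (4 * α + 2 * δ) := by rw [e1, e2, e3]
end

section
/- Let δ ∈ (0,1], δ/2 ≤ β ≤ α, and u ∈ H^{2α+δ}(ℝⁿ). Then ‖((−Δ)^α − (−Δ)^β)u‖_{L²} ≤ C·(α−β)^δ·‖u‖_{H^{2α+δ}}, where C is a universal constant independent of δ, α, β. -/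
open MeasureTheory Real

lemma min_one_le_rpow_aux {x δ : ℝ} (hx : 0 ≤ x) (hδ0 : 0 < δ) (hδ1 : δ ≤ 1) :
    min 1 x ≤ x ^ δ := by
  rcases le_total x 1 with h | h
  · rw [min_eq_right h]
    rcases eq_or_lt_of_le hx with h0 | h0
    · simp [← h0, Real.zero_rpow hδ0.ne']
    · calc x = x ^ (1:ℝ) := (Real.rpow_one x).symm
        _ ≤ x ^ δ := Real.rpow_le_rpow_of_exponent_ge h0 h hδ1
  · exact (min_le_left _ _).trans (Real.one_le_rpow h hδ0.le)

lemma key_abs {δ α β r : ℝ} (hδ0 : 0 < δ) (hδ1 : δ ≤ 1) (hβ : δ / 2 ≤ β)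
    (hαβ : β ≤ α) (hr : 0 ≤ r) :
    |r ^ (2 * α) - r ^ (2 * β)| ≤ 2 * (α - β) ^ δ * (1 + r ^ 2) ^ (α + δ / 2) := by
  have hβ0 : 0 < β := lt_of_lt_of_le (by linarith) hβ
  have hα0 : 0 < α := lt_of_lt_of_le hβ0 hαβ
  have ht : 0 ≤ α - β := by linarith
  have hbase1 : (1:ℝ) ≤ 1 + r ^ 2 := by nlinarith
  have hRpow1 : (1:ℝ) ≤ (1 + r ^ 2) ^ (α + δ / 2) :=
    Real.one_le_rpow hbase1 (by linarith)
  have h2δ : (2:ℝ) ^ δ ≤ 2 := by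
    calc (2:ℝ) ^ δ ≤ 2 ^ (1:ℝ) := Real.rpow_le_rpow_of_exponent_le one_le_two hδ1
      _ = 2 := Real.rpow_one 2
  have htδ : 0 ≤ (α - β) ^ δ := Real.rpow_nonneg ht δ
  rcases eq_or_lt_of_le hr with h0 | h0
  · rw [← h0, Real.zero_rpow (by positivity : (2*α) ≠ 0), Real.zero_rpow (by positivity : (2*β) ≠ 0)]
    simpa using by positivity
  rcases le_total r 1 with hr1 | hr1
  · -- 0 < r ≤ 1
    have hle : r ^ (2 * α) ≤ r ^ (2 * β) :=
      Real.rpow_le_rpow_of_exponent_ge h0 hr1 (by linarith)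
    rw [abs_sub_comm, abs_of_nonneg (by linarith)]
    have e1 : r ^ (2 * α) = r ^ (2 * β) * r ^ (2 * (α - β)) := by
      rw [← Real.rpow_add h0]; congr 1; ring
    have h1 : 1 - r ^ (2 * (α - β)) ≤ min 1 (2 * (α - β) * (-Real.log r)) := by
      refine le_min ?_ ?_
      · nlinarith [Real.rpow_nonneg hr (2 * (α - β))]
      · have h3 := Real.add_one_le_exp (Real.log r * (2 * (α - β)))
        rw [Real.rpow_def_of_pos h0]
        have h4 : 2 * (α - β) * (-Real.log r) = -(Real.log r * (2 * (α - β))) := by ring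
        rw [h4]; linarith
    have hrb : 0 ≤ r ^ (2 * β) := Real.rpow_nonneg hr _
    have key1 : r ^ (2 * β) - r ^ (2 * α) ≤
        r ^ (2 * β) * min 1 (2 * (α - β) * (-Real.log r)) := by
      calc r ^ (2 * β) - r ^ (2 * α)
          = r ^ (2 * β) * (1 - r ^ (2 * (α - β))) := by rw [e1]; ring
        _ ≤ _ := mul_le_mul_of_nonneg_left h1 hrb
    have hmnn : 0 ≤ min 1 (2 * (α - β) * (-Real.log r)) := by
      refine le_min zero_le_one ?_
      have : 0 ≤ -Real.log r := by
        have := Real.log_nonpos hr hr1; linarith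
      positivity
    have key2 : r ^ (2 * β) * min 1 (2 * (α - β) * (-Real.log r)) ≤ 2 * (α - β) ^ δ := by
      have hlognn : 0 ≤ -Real.log r := by
        have := Real.log_nonpos hr hr1; linarith
      have hml : min 1 (2 * (α - β) * (-Real.log r)) ≤ (2 * (α - β) * (-Real.log r)) ^ δ :=
        min_one_le_rpow_aux (by positivity) hδ0 hδ1
      have e2 : (2 * (α - β) * (-Real.log r)) ^ δ
          = (2:ℝ) ^ δ * (α - β) ^ δ * (-Real.log r) ^ δ := by
        rw [Real.mul_rpow (by positivity) hlognn, Real.mul_rpow (by norm_num) ht]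
      have hrβδ : r ^ (2 * β) ≤ r ^ δ := Real.rpow_le_rpow_of_exponent_ge h0 hr1 (by linarith)
      have hrlog : r ^ δ * (-Real.log r) ^ δ ≤ 1 := by
        rw [← Real.mul_rpow hr hlognn]
        apply Real.rpow_le_one (by positivity) ?_ hδ0.le
        have hl := Real.log_le_sub_one_of_pos (inv_pos.2 h0)
        rw [Real.log_inv] at hl
        have hinv : r * r⁻¹ = 1 := mul_inv_cancel₀ h0.ne'
        nlinarith [mul_le_mul_of_nonneg_left hl hr]
      calc r ^ (2*β) * min 1 (2 * (α - β) * (-Real.log r))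
          ≤ r ^ δ * ((2:ℝ) ^ δ * (α - β) ^ δ * (-Real.log r) ^ δ) :=
            mul_le_mul hrβδ (le_trans hml (le_of_eq e2)) hmnn (Real.rpow_nonneg hr δ)
        _ = (2:ℝ) ^ δ * (α - β) ^ δ * (r ^ δ * (-Real.log r) ^ δ) := by ring
        _ ≤ 2 * (α - β) ^ δ * 1 :=
            mul_le_mul (mul_le_mul h2δ le_rfl htδ (by norm_num)) hrlog
              (by positivity) (by positivity)
        _ = 2 * (α - β) ^ δ := by ring
    calc r ^ (2*β) - r ^ (2*α) ≤ 2 * (α - β) ^ δ := le_trans key1 key2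
      _ = 2 * (α - β) ^ δ * 1 := by ring
      _ ≤ _ := mul_le_mul_of_nonneg_left hRpow1 (by positivity)
  · -- r ≥ 1
    have hle : r ^ (2 * β) ≤ r ^ (2 * α) :=
      Real.rpow_le_rpow_of_exponent_le hr1 (by linarith)
    rw [abs_of_nonneg (by linarith)]
    have hlogr : 0 ≤ Real.log r := Real.log_nonneg hr1
    have e1 : r ^ (2 * β) = r ^ (2 * α) * r ^ (-(2 * (α - β))) := by
      rw [← Real.rpow_add h0]; congr 1; ring
    have h1 : 1 - r ^ (-(2 * (α - β))) ≤ min 1 (2 * (α - β) * Real.log r) := by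
      refine le_min ?_ ?_
      · nlinarith [Real.rpow_nonneg hr (-(2 * (α - β)))]
      · have h3 := Real.add_one_le_exp (Real.log r * (-(2 * (α - β))))
        rw [Real.rpow_def_of_pos h0]
        have h4 : 2 * (α - β) * Real.log r = -(Real.log r * (-(2 * (α - β)))) := by ring
        rw [h4]; linarith
    have hrb : 0 ≤ r ^ (2 * α) := Real.rpow_nonneg hr _
    have key1 : r ^ (2 * α) - r ^ (2 * β) ≤
        r ^ (2 * α) * min 1 (2 * (α - β) * Real.log r) := by
      calc r ^ (2 * α) - r ^ (2 * β)
          = r ^ (2 * α) * (1 - r ^ (-(2 * (α - β)))) := by rw [e1]; ring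
        _ ≤ _ := mul_le_mul_of_nonneg_left h1 hrb
    have key2 : r ^ (2 * α) * min 1 (2 * (α - β) * Real.log r)
        ≤ 2 * (α - β) ^ δ * (1 + r ^ 2) ^ (α + δ / 2) := by
      have hml : min 1 (2 * (α - β) * Real.log r) ≤ (2 * (α - β) * Real.log r) ^ δ :=
        min_one_le_rpow_aux (by positivity) hδ0 hδ1
      have e2 : (2 * (α - β) * Real.log r) ^ δ
          = (2:ℝ) ^ δ * (α - β) ^ δ * (Real.log r) ^ δ := by
        rw [Real.mul_rpow (by positivity) hlogr, Real.mul_rpow (by norm_num) ht]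
      have hlogδ : (Real.log r) ^ δ ≤ r ^ δ := by
        apply Real.rpow_le_rpow hlogr ?_ hδ0.le
        have := Real.log_le_sub_one_of_pos h0
        linarith
      have hS : r ^ (2 * α) * r ^ δ ≤ (1 + r ^ 2) ^ (α + δ / 2) := by
        rw [← Real.rpow_add h0]
        have e3 : r ^ (2 * α + δ) = (r ^ 2) ^ (α + δ / 2) := by
          rw [← Real.rpow_natCast r 2, ← Real.rpow_mul hr]
          congr 1; push_cast; ring
        rw [e3]
        exact Real.rpow_le_rpow (by positivity) (by nlinarith) (by linarith)
      calc r ^ (2 * α) * min 1 (2 * (α - β) * Real.log r)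
          ≤ r ^ (2 * α) * ((2:ℝ) ^ δ * (α - β) ^ δ * (Real.log r) ^ δ) :=
            mul_le_mul_of_nonneg_left (le_trans hml (le_of_eq e2)) hrb
        _ ≤ r ^ (2 * α) * ((2:ℝ) ^ δ * (α - β) ^ δ * r ^ δ) := by
            refine mul_le_mul_of_nonneg_left ?_ hrb
            exact mul_le_mul_of_nonneg_left hlogδ
              (mul_nonneg (Real.rpow_nonneg (by norm_num) δ) htδ)
        _ = (2:ℝ) ^ δ * (α - β) ^ δ * (r ^ (2 * α) * r ^ δ) := by ring
        _ ≤ 2 * (α - β) ^ δ * (1 + r ^ 2) ^ (α + δ / 2) :=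
            mul_le_mul (mul_le_mul h2δ le_rfl htδ (by norm_num)) hS
              (mul_nonneg hrb (Real.rpow_nonneg hr δ)) (by positivity)
    linarith

lemma rpow_two_mul {x y : ℝ} (hx : 0 ≤ x) : (x ^ y) ^ 2 = x ^ (2 * y) := by
  rw [← Real.rpow_natCast (x ^ y) 2, ← Real.rpow_mul hx]
  congr 1; push_cast; ring

lemma key_sq {δ α β r : ℝ} (hδ0 : 0 < δ) (hδ1 : δ ≤ 1) (hβ : δ / 2 ≤ β)
    (hαβ : β ≤ α) (hr : 0 ≤ r) :
    (r ^ (2 * α) - r ^ (2 * β)) ^ 2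
      ≤ 4 * (α - β) ^ (2 * δ) * (1 + r ^ 2) ^ (2 * α + δ) := by
  have ht : 0 ≤ α - β := by linarith
  have hb : (0:ℝ) ≤ 1 + r ^ 2 := by positivity
  have h := key_abs hδ0 hδ1 hβ hαβ hr
  have e1 : ((α - β) ^ δ) ^ 2 = (α - β) ^ (2 * δ) := rpow_two_mul ht
  have e2 : ((1 + r ^ 2) ^ (α + δ / 2)) ^ 2 = (1 + r ^ 2) ^ (2 * α + δ) := by
    rw [rpow_two_mul hb]; congr 1; ring
  calc (r ^ (2 * α) - r ^ (2 * β)) ^ 2 = |r ^ (2 * α) - r ^ (2 * β)| ^ 2 := (sq_abs _).symm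
    _ ≤ (2 * (α - β) ^ δ * (1 + r ^ 2) ^ (α + δ / 2)) ^ 2 :=
        pow_le_pow_left₀ (abs_nonneg _) h 2
    _ = 4 * (α - β) ^ (2 * δ) * (1 + r ^ 2) ^ (2 * α + δ) := by
        rw [mul_pow, mul_pow, e1, e2]; norm_num


theorem fractional_laplacian_difference_estimate :
    ∃ C : ℝ, 0 < C ∧
      ∀ (n : ℕ) (δ α β : ℝ) (u : EuclideanSpace ℝ (Fin n) → ℂ),
        0 < δ → δ ≤ 1 → δ / 2 ≤ β → β ≤ α →
        Integrable (fun ξ : EuclideanSpace ℝ (Fin n) =>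
          (1 + ‖ξ‖ ^ 2) ^ (2 * α + δ) * ‖FourierTransform.fourier u ξ‖ ^ 2) →
        Real.sqrt (∫ ξ : EuclideanSpace ℝ (Fin n),
            (‖ξ‖ ^ (2 * α) - ‖ξ‖ ^ (2 * β)) ^ 2 * ‖FourierTransform.fourier u ξ‖ ^ 2) ≤
          C * (α - β) ^ δ *
            Real.sqrt (∫ ξ : EuclideanSpace ℝ (Fin n),
              (1 + ‖ξ‖ ^ 2) ^ (2 * α + δ) * ‖FourierTransform.fourier u ξ‖ ^ 2) := by
  refine ⟨2, two_pos, ?_⟩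
  intro n δ α β u hδ0 hδ1 hβ hαβ hint
  have ht : 0 ≤ α - β := by linarith
  set c : ℝ := 4 * (α - β) ^ (2 * δ) with hc
  have hcnn : 0 ≤ c := by
    have := Real.rpow_nonneg ht (2 * δ); positivity
  have hmono : (∫ ξ : EuclideanSpace ℝ (Fin n),
      (‖ξ‖ ^ (2 * α) - ‖ξ‖ ^ (2 * β)) ^ 2 * ‖FourierTransform.fourier u ξ‖ ^ 2)
      ≤ ∫ ξ : EuclideanSpace ℝ (Fin n),
        c * ((1 + ‖ξ‖ ^ 2) ^ (2 * α + δ) * ‖FourierTransform.fourier u ξ‖ ^ 2) := by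
    refine integral_mono_of_nonneg (Filter.Eventually.of_forall fun ξ => by positivity)
      (hint.const_mul c) (Filter.Eventually.of_forall fun ξ => ?_)
    have h1 := key_sq hδ0 hδ1 hβ hαβ (norm_nonneg ξ)
    have h2 : (0:ℝ) ≤ ‖FourierTransform.fourier u ξ‖ ^ 2 := by positivity
    calc (‖ξ‖ ^ (2 * α) - ‖ξ‖ ^ (2 * β)) ^ 2 * ‖FourierTransform.fourier u ξ‖ ^ 2
        ≤ c * (1 + ‖ξ‖ ^ 2) ^ (2 * α + δ) * ‖FourierTransform.fourier u ξ‖ ^ 2 :=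
          mul_le_mul_of_nonneg_right h1 h2
      _ = c * ((1 + ‖ξ‖ ^ 2) ^ (2 * α + δ) * ‖FourierTransform.fourier u ξ‖ ^ 2) := by ring
  rw [integral_const_mul] at hmono
  have hsq4 : Real.sqrt c = 2 * (α - β) ^ δ := by
    have : c = (2 * (α - β) ^ δ) ^ 2 := by
      rw [mul_pow, rpow_two_mul ht]; norm_num [hc]
    rw [this, Real.sqrt_sq (by positivity)]
  calc Real.sqrt (∫ ξ : EuclideanSpace ℝ (Fin n),
        (‖ξ‖ ^ (2 * α) - ‖ξ‖ ^ (2 * β)) ^ 2 * ‖FourierTransform.fourier u ξ‖ ^ 2)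
      ≤ Real.sqrt (c * ∫ ξ : EuclideanSpace ℝ (Fin n),
          (1 + ‖ξ‖ ^ 2) ^ (2 * α + δ) * ‖FourierTransform.fourier u ξ‖ ^ 2) :=
        Real.sqrt_le_sqrt hmono
    _ = Real.sqrt c * Real.sqrt (∫ ξ : EuclideanSpace ℝ (Fin n),
          (1 + ‖ξ‖ ^ 2) ^ (2 * α + δ) * ‖FourierTransform.fourier u ξ‖ ^ 2) :=
        Real.sqrt_mul hcnn _
    _ = 2 * (α - β) ^ δ * Real.sqrt (∫ ξ : EuclideanSpace ℝ (Fin n),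
          (1 + ‖ξ‖ ^ 2) ^ (2 * α + δ) * ‖FourierTransform.fourier u ξ‖ ^ 2) := by rw [hsq4]
end
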